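/- Fix a nonzero constant c and define x : I × ℝ → R^3 by x(s,t) = (1/c)·(arcsinh(cs), sqrt(c²s² + 1) cosh t, sqrt(c²s² + 1) sinh t). Then x is an immersion into Minkowski 3-space whose induced metric is Lorentzian (the surface is timelike), and its mean curvature vanishes identically (the surface is minimal). -/

import Mathlib

noncomputable section

/-- The Minkowski bilinear form on `ℝ³ = ℝ × ℝ × ℝ`. -/
def mink (v w : ℝ × ℝ × ℝ) : ℝ :=
  v.1 * w.1 + v.2.1 * w.2.1 - v.2.2 * w.2.2

/-- Partial derivative in the first variable of an `ℝ³`-valued map. -/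
def pds (f : ℝ → ℝ → ℝ × ℝ × ℝ) (s t : ℝ) : ℝ × ℝ × ℝ :=
  (deriv (fun σ => (f σ t).1) s,
   deriv (fun σ => (f σ t).2.1) s,
   deriv (fun σ => (f σ t).2.2) s)

/-- Partial derivative in the second variable of an `ℝ³`-valued map. -/
def pdt (f : ℝ → ℝ → ℝ × ℝ × ℝ) (s t : ℝ) : ℝ × ℝ × ℝ :=
  (deriv (fun τ => (f s τ).1) t,
   deriv (fun τ => (f s τ).2.1) t,
   deriv (fun τ => (f s τ).2.2) t)

/-- The minimal CPD surface of the first kind. -/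
def xsurf (c : ℝ) (s t : ℝ) : ℝ × ℝ × ℝ :=
  ((1 / c) * Real.arsinh (c * s),
   (1 / c) * (Real.sqrt (c ^ 2 * s ^ 2 + 1) * Real.cosh t),
   (1 / c) * (Real.sqrt (c ^ 2 * s ^ 2 + 1) * Real.sinh t))

/-!
`xsurf c` is swept out from the profile curve `(arsinh (c s) / c, √(c²s² + 1) / c)` by the boosts
of the `(x₂, x₃)`-plane. For such a surface `F = 0`; here moreover `E = 1` and
`G = -(c²s² + 1)/c² < 0`, so the surface is timelike, and `G x_ss + E x_tt = s x_s` is tangent.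
Hence `⟨G x_ss - 2F x_st + E x_tt, N⟩ = 0` for every normal `N`, i.e. `H = 0`.
-/

open Real

theorem meanCurvature_numerator_eq_zero_of_tangent {u v p q r N : ℝ × ℝ × ℝ} (a b : ℝ)
    (hu : mink N u = 0) (hv : mink N v = 0)
    (h : mink v v • p - (2 * mink u v) • q + mink u u • r = a • u + b • v) :
    mink p N * mink v v - 2 * mink q N * mink u v + mink r N * mink u u = 0 := by
  have h' := congrArg (fun x => mink x N) h
  simp only [mink, Prod.fst_add, Prod.snd_add, Prod.fst_sub, Prod.snd_sub, Prod.smul_fst,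
    Prod.smul_snd, smul_eq_mul] at h' hu hv ⊢
  linear_combination h' + a * hu + b * hv

-- With `φ = cosh, ψ = sinh` this is a surface of revolution under boosts; allowing general `φ, ψ`
-- keeps the `t`-derivatives inside the family.
def revSurf (α β φ ψ : ℝ → ℝ) (s t : ℝ) : ℝ × ℝ × ℝ :=
  (α s, β s * φ t, β s * ψ t)

section revSurf

variable (α β φ ψ : ℝ → ℝ)

theorem pds_revSurf : pds (revSurf α β φ ψ) = revSurf (deriv α) (deriv β) φ ψ := by
  funext s t
  simp only [pds, revSurf, deriv_mul_const_field]

theorem pdt_revSurf : pdt (revSurf α β φ ψ) = revSurf 0 β (deriv φ) (deriv ψ) := by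
  funext s t
  simp only [pdt, revSurf, deriv_const, deriv_const_mul_field, Pi.zero_apply]

variable (α' β' : ℝ → ℝ) (s t : ℝ)

theorem mink_revSurf_cosh_sinh :
    mink (revSurf α β cosh sinh s t) (revSurf α' β' cosh sinh s t) = α s * α' s + β s * β' s := by
  simp only [mink, revSurf]
  linear_combination β s * β' s * cosh_sq_sub_sinh_sq t

theorem mink_revSurf_cosh_sinh_sinh_cosh :
    mink (revSurf α β cosh sinh s t) (revSurf α' β' sinh cosh s t) = α s * α' s := by
  simp only [mink, revSurf]
  ring

theorem mink_revSurf_sinh_cosh :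
    mink (revSurf α β sinh cosh s t) (revSurf α' β' sinh cosh s t) = α s * α' s - β s * β' s := by
  simp only [mink, revSurf]
  linear_combination -(β s * β' s) * cosh_sq_sub_sinh_sq t

end revSurf

theorem xsurf_eq_revSurf (c : ℝ) :
    xsurf c =
      revSurf (fun s => arsinh (c * s) / c) (fun s => √(c ^ 2 * s ^ 2 + 1) / c) cosh sinh := by
  funext s t
  simp only [xsurf, revSurf]
  ext <;> simp only <;> ring

theorem hasDerivAt_sqrt_sq_mul_sq_add_one (c s : ℝ) :
    HasDerivAt (fun σ => √(c ^ 2 * σ ^ 2 + 1)) (c ^ 2 * s / √(c ^ 2 * s ^ 2 + 1)) s := by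
  have h := ((hasDerivAt_pow 2 s).const_mul (c ^ 2)).add_const 1
  convert h.sqrt (by positivity) using 1
  ring

theorem deriv_arsinh_mul_div {c : ℝ} (hc : c ≠ 0) :
    deriv (fun s => arsinh (c * s) / c) = fun s => 1 / √(c ^ 2 * s ^ 2 + 1) := by
  funext s
  have h : HasDerivAt (fun s => arsinh (c * s) / c) _ s :=
    (((hasDerivAt_id' s).const_mul c).arsinh).div_const c
  rw [h.deriv, smul_eq_mul]
  field_simp
  ring_nf

theorem deriv_sqrt_sq_mul_sq_add_one_div {c : ℝ} (hc : c ≠ 0) :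
    deriv (fun s => √(c ^ 2 * s ^ 2 + 1) / c) = fun s => c * s / √(c ^ 2 * s ^ 2 + 1) := by
  funext s
  rw [((hasDerivAt_sqrt_sq_mul_sq_add_one c s).div_const c).deriv]
  field_simp

theorem deriv_one_div_sqrt_sq_mul_sq_add_one (c : ℝ) :
    deriv (fun s => 1 / √(c ^ 2 * s ^ 2 + 1)) =
      fun s => -(c ^ 2 * s) / √(c ^ 2 * s ^ 2 + 1) ^ 3 := by
  funext s
  have h : HasDerivAt (fun s => 1 / √(c ^ 2 * s ^ 2 + 1)) _ s :=
    (hasDerivAt_const s 1).div (hasDerivAt_sqrt_sq_mul_sq_add_one c s) (by positivity)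
  rw [h.deriv]
  field_simp
  ring

theorem deriv_mul_div_sqrt_sq_mul_sq_add_one (c : ℝ) :
    deriv (fun s => c * s / √(c ^ 2 * s ^ 2 + 1)) = fun s => c / √(c ^ 2 * s ^ 2 + 1) ^ 3 := by
  funext s
  have h : HasDerivAt (fun s => c * s / √(c ^ 2 * s ^ 2 + 1)) _ s :=
    ((hasDerivAt_id' s).const_mul c).div (hasDerivAt_sqrt_sq_mul_sq_add_one c s) (by positivity)
  have hw2 : √(c ^ 2 * s ^ 2 + 1) ^ 2 = c ^ 2 * s ^ 2 + 1 := sq_sqrt (by positivity)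
  rw [h.deriv]
  field_simp
  linear_combination c * hw2

section xsurf

variable {c : ℝ}

theorem pds_xsurf (hc : c ≠ 0) :
    pds (xsurf c) =
      revSurf (fun s => 1 / √(c ^ 2 * s ^ 2 + 1)) (fun s => c * s / √(c ^ 2 * s ^ 2 + 1))
        cosh sinh := by
  rw [xsurf_eq_revSurf, pds_revSurf, deriv_arsinh_mul_div hc, deriv_sqrt_sq_mul_sq_add_one_div hc]

theorem pdt_xsurf : pdt (xsurf c) = revSurf 0 (fun s => √(c ^ 2 * s ^ 2 + 1) / c) sinh cosh := by
  rw [xsurf_eq_revSurf, pdt_revSurf, Real.deriv_cosh, Real.deriv_sinh]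

theorem pds_pds_xsurf (hc : c ≠ 0) :
    pds (pds (xsurf c)) =
      revSurf (fun s => -(c ^ 2 * s) / √(c ^ 2 * s ^ 2 + 1) ^ 3)
        (fun s => c / √(c ^ 2 * s ^ 2 + 1) ^ 3) cosh sinh := by
  rw [pds_xsurf hc, pds_revSurf, deriv_one_div_sqrt_sq_mul_sq_add_one,
    deriv_mul_div_sqrt_sq_mul_sq_add_one]

theorem pdt_pds_xsurf (hc : c ≠ 0) :
    pdt (pds (xsurf c)) = revSurf 0 (fun s => c * s / √(c ^ 2 * s ^ 2 + 1)) sinh cosh := by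
  rw [pds_xsurf hc, pdt_revSurf, Real.deriv_cosh, Real.deriv_sinh]

theorem pdt_pdt_xsurf :
    pdt (pdt (xsurf c)) = revSurf 0 (fun s => √(c ^ 2 * s ^ 2 + 1) / c) cosh sinh := by
  rw [pdt_xsurf, pdt_revSurf, Real.deriv_cosh, Real.deriv_sinh]

variable (s t : ℝ)

theorem mink_pds_xsurf_self (hc : c ≠ 0) : mink (pds (xsurf c) s t) (pds (xsurf c) s t) = 1 := by
  have hw2 : √(c ^ 2 * s ^ 2 + 1) ^ 2 = c ^ 2 * s ^ 2 + 1 := sq_sqrt (by positivity)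
  rw [pds_xsurf hc, mink_revSurf_cosh_sinh]
  field_simp
  linear_combination -hw2

theorem mink_pds_xsurf_pdt_xsurf (hc : c ≠ 0) :
    mink (pds (xsurf c) s t) (pdt (xsurf c) s t) = 0 := by
  rw [pds_xsurf hc, pdt_xsurf, mink_revSurf_cosh_sinh_sinh_cosh, Pi.zero_apply, mul_zero]

theorem mink_pdt_xsurf_self :
    mink (pdt (xsurf c) s t) (pdt (xsurf c) s t) = -((c ^ 2 * s ^ 2 + 1) / c ^ 2) := by
  rw [pdt_xsurf, mink_revSurf_sinh_cosh, Pi.zero_apply, div_mul_div_comm,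
    mul_self_sqrt (by positivity)]
  ring

theorem smul_pds_pds_xsurf_add_pdt_pdt_xsurf (hc : c ≠ 0) :
    (-((c ^ 2 * s ^ 2 + 1) / c ^ 2)) • pds (pds (xsurf c)) s t + pdt (pdt (xsurf c)) s t =
      s • pds (xsurf c) s t := by
  have hw2 : √(c ^ 2 * s ^ 2 + 1) ^ 2 = c ^ 2 * s ^ 2 + 1 := sq_sqrt (by positivity)
  rw [pds_pds_xsurf hc, pdt_pdt_xsurf, pds_xsurf hc]
  simp only [revSurf, Prod.smul_mk, Prod.mk_add_mk, smul_eq_mul, Pi.zero_apply]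
  refine Prod.ext ?_ (Prod.ext ?_ ?_) <;> dsimp only <;> field_simp
  · linear_combination -s * hw2
  · linear_combination (√(c ^ 2 * s ^ 2 + 1) ^ 2 + 1) * hw2
  · linear_combination sinh t * (√(c ^ 2 * s ^ 2 + 1) ^ 2 + 1) * hw2

end xsurf

theorem stmt_8 (c : ℝ) (hc : c ≠ 0) (s t : ℝ) :
    (mink (pds (xsurf c) s t) (pds (xsurf c) s t) *
         mink (pdt (xsurf c) s t) (pdt (xsurf c) s t) -
       (mink (pds (xsurf c) s t) (pdt (xsurf c) s t)) ^ 2 < 0) ∧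
    ∀ N : ℝ × ℝ × ℝ,
      mink N (pds (xsurf c) s t) = 0 → mink N (pdt (xsurf c) s t) = 0 →
      mink N N = 1 →
      mink (pds (pds (xsurf c)) s t) N * mink (pdt (xsurf c) s t) (pdt (xsurf c) s t)
        - 2 * mink (pdt (pds (xsurf c)) s t) N *
            mink (pds (xsurf c) s t) (pdt (xsurf c) s t)
        + mink (pdt (pdt (xsurf c)) s t) N *
            mink (pds (xsurf c) s t) (pds (xsurf c) s t) = 0 := by
  refine ⟨?_, fun N hNs hNt _ => meanCurvature_numerator_eq_zero_of_tangent s 0 hNs hNt ?_⟩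
  · rw [mink_pds_xsurf_self s t hc, mink_pdt_xsurf_self, mink_pds_xsurf_pdt_xsurf s t hc]
    have : 0 < (c ^ 2 * s ^ 2 + 1) / c ^ 2 := by positivity
    linarith
  · rw [mink_pds_xsurf_self s t hc, mink_pdt_xsurf_self, mink_pds_xsurf_pdt_xsurf s t hc,
      mul_zero, zero_smul, sub_zero, one_smul, zero_smul, add_zero]
    exact smul_pds_pds_xsurf_add_pdt_pdt_xsurf s t hc
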